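/- Let k ≥ 1 and let k_1,…,k_n be positive integers with k_1 + ⋯ + k_n = 2k. Over candidates {A,B,C}, consider the weighted profile consisting of: one voter of weight k with fixed vote C>A>B, one voter of weight k with fixed vote C>B>A, and for each i ∈ {1,…,n} a voter of weight k_i whose vote may be chosen arbitrarily among the strict linear orders ranking both A above C and B above C (namely A>B>C, B>A>C). Then there exists a choice of these votes under which C is a Copeland co-winner (equivalently, under which N(A,B) = N(B,A)) if and only if there exists a subset S ⊆ {1,…,n} with Σ_{i∈S} k_i = k. -/

import Mathlib

/-!
Over candidates {A,B,C}: fixed votes C>A>B (weight k) and C>B>A (weight k),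
plus for each i a voter of weight kᵢ whose partitionVotes may be chosen among the
linear orders ranking both A and B above C.  Some choice makes C a Copeland
co-winner iff some subset of the kᵢ sums to k.
-/

namespace Stmt9

inductive Cand where
  | A | B | C
deriving DecidableEq

instance : Fintype Cand where
  elems := {Cand.A, Cand.B, Cand.C}
  complete := by intro x; cases x <;> simp

open Cand

/-- `above l x y` : in the partitionVotes given by list `l` (best candidate first),
`x` is ranked above `y`. -/
def above (l : List Cand) (x y : Cand) : Prop := l.idxOf x < l.idxOf y

instance (l : List Cand) (x y : Cand) : Decidable (above l x y) :=
  inferInstanceAs (Decidable (_ < _))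

/-- Total weight of voters ranking `x` above `y`, where `f` gives the votes
of the manipulable voters. -/
def N (k : ℕ) {n : ℕ} (kk : Fin n → ℕ) (f : Fin n → List Cand) (x y : Cand) : ℕ :=
  (if above [C, A, B] x y then k else 0)
  + (if above [C, B, A] x y then k else 0)
  + ∑ i, (if above (f i) x y then kk i else 0)

/-- Copeland score of `x`: pairwise wins minus pairwise losses. -/
def copelandScore (N : Cand → Cand → ℕ) (x : Cand) : ℤ :=
  ∑ y ∈ Finset.univ.erase x,
    ((if N x y > N y x then 1 else 0) - (if N x y < N y x then 1 else 0) : ℤ)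


/-!
Every admissible vote ranks A and B above C, so together with the two fixed voters C ties
with both A and B (each side has weight 2k), and C's Copeland score is 0. Then C is a
co-winner exactly when A and B tie as well, i.e. when the voters choosing A > B > C carry
half of the 2k manipulable weight.
-/

def IsCopelandCoWinner (M : Cand → Cand → ℕ) (x : Cand) : Prop :=
  ∀ y, copelandScore M y ≤ copelandScore M x

lemma Cand.forall {P : Cand → Prop} : (∀ x, P x) ↔ P A ∧ P B ∧ P C :=
  ⟨fun h => ⟨h A, h B, h C⟩, fun ⟨hA, hB, hC⟩ x => by cases x <;> assumption⟩

lemma univ_erase_A : (Finset.univ.erase A : Finset Cand) = {B, C} := by decide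
lemma univ_erase_B : (Finset.univ.erase B : Finset Cand) = {A, C} := by decide
lemma univ_erase_C : (Finset.univ.erase C : Finset Cand) = {A, B} := by decide

lemma isCopelandCoWinner_C_iff_of_ties {M : Cand → Cand → ℕ} (hA : M A C = M C A)
    (hB : M B C = M C B) : IsCopelandCoWinner M C ↔ M A B = M B A := by
  simp only [IsCopelandCoWinner, Cand.forall, copelandScore, univ_erase_A, univ_erase_B,
    univ_erase_C, Finset.sum_pair (show A ≠ B by decide),
    Finset.sum_pair (show A ≠ C by decide), Finset.sum_pair (show B ≠ C by decide), hA, hB]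
  split_ifs <;> omega

def partitionVotes {n : ℕ} (S : Finset (Fin n)) (i : Fin n) : List Cand :=
  if i ∈ S then [A, B, C] else [B, A, C]

lemma forall_mem_iff_exists_eq_partitionVotes {n : ℕ} {f : Fin n → List Cand} :
    (∀ i, f i ∈ [[A, B, C], [B, A, C]]) ↔ ∃ S, f = partitionVotes S := by
  constructor
  · intro hf
    refine ⟨Finset.univ.filter (f · = [A, B, C]), funext fun i => ?_⟩
    rcases List.mem_pair.1 (hf i) with h | h <;> simp [partitionVotes, h]
  · rintro ⟨S, rfl⟩ i
    by_cases h : i ∈ S <;> simp [partitionVotes, h]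

lemma N_partitionVotes (k : ℕ) {n : ℕ} (kk : Fin n → ℕ) (S : Finset (Fin n)) (x y : Cand) :
    N k kk (partitionVotes S) x y =
      (if above [C, A, B] x y then k else 0) + (if above [C, B, A] x y then k else 0)
      + ((if above [A, B, C] x y then ∑ i ∈ S, kk i else 0)
        + if above [B, A, C] x y then ∑ i ∈ Sᶜ, kk i else 0) := by
  rw [N, ← Finset.sum_add_sum_compl S]
  congr 2
  · rw [Finset.ite_sum_zero]
    exact Finset.sum_congr rfl fun i hi => by simp [partitionVotes, hi]
  · rw [Finset.ite_sum_zero]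
    exact Finset.sum_congr rfl fun i hi => by simp [partitionVotes, Finset.mem_compl.1 hi]

lemma isCopelandCoWinner_partitionVotes_iff {k n : ℕ} {kk : Fin n → ℕ}
    (hsum : ∑ i, kk i = 2 * k) (S : Finset (Fin n)) :
    IsCopelandCoWinner (N k kk (partitionVotes S)) C ↔ ∑ i ∈ S, kk i = k := by
  have hS := Finset.sum_add_sum_compl S kk
  rw [isCopelandCoWinner_C_iff_of_ties] <;> simp [N_partitionVotes, above] <;> omega

theorem copeland_preference_manipulation_iff_partition_general
    (k n : ℕ) (kk : Fin n → ℕ)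
    (hsum : ∑ i, kk i = 2 * k) :
    (∃ f : Fin n → List Cand,
        (∀ i, f i ∈ [[A, B, C], [B, A, C]]) ∧
        ∀ y : Cand, copelandScore (N k kk f) y ≤ copelandScore (N k kk f) C)
    ↔ ∃ S : Finset (Fin n), ∑ i ∈ S, kk i = k := by
  constructor
  · rintro ⟨f, hf, hwin⟩
    obtain ⟨S, rfl⟩ := forall_mem_iff_exists_eq_partitionVotes.1 hf
    exact ⟨S, (isCopelandCoWinner_partitionVotes_iff hsum S).1 hwin⟩
  · rintro ⟨S, hS⟩
    exact ⟨partitionVotes S, forall_mem_iff_exists_eq_partitionVotes.2 ⟨S, rfl⟩,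
      (isCopelandCoWinner_partitionVotes_iff hsum S).2 hS⟩

theorem copeland_preference_manipulation_iff_partition
    (k n : ℕ) (hk : 1 ≤ k) (kk : Fin n → ℕ) (hpos : ∀ i, 1 ≤ kk i)
    (hsum : ∑ i, kk i = 2 * k) :
    (∃ f : Fin n → List Cand,
        (∀ i, f i ∈ [[A, B, C], [B, A, C]]) ∧
        ∀ y : Cand, copelandScore (N k kk f) y ≤ copelandScore (N k kk f) C)
    ↔ ∃ S : Finset (Fin n), ∑ i ∈ S, kk i = k :=
  copeland_preference_manipulation_iff_partition_general k n kk hsum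

end Stmt9
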